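/- Let n be a positive integer, Σ : Matrix (Fin n) (Fin n) ℝ a symmetric positive-definite matrix, v ∈ ℝⁿ, and M : Matrix (Fin n) (Fin n) ℝ a symmetric matrix. Define the score U(r) = vᵀ Σ⁻¹ r + (1/2) rᵀ Σ⁻¹ M Σ⁻¹ r − (1/2) trace(Σ⁻¹ * M). Then the Fisher Information E[U²] = ∫ U(r)² * φ_Σ(r) dr equals vᵀ Σ⁻¹ v + (1/2) * trace((Σ⁻¹ * M)^2). -/

import Mathlib

/-!
Whitening: write `Σ = A Aᵀ` with `Aᵀ (Σ⁻¹ M Σ⁻¹) A = diag d` (simultaneous diagonalisation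
of the pair `Σ, Σ⁻¹ M Σ⁻¹`). The substitution `r = A x` turns `φ_Σ(r) dr` into the standard
Gaussian `∏ φ(xₘ) dx` and the score into `∑ᵢ (cᵢ xᵢ + dᵢ/2 (xᵢ² - 1))` with `cᵀ = vᵀ Σ⁻¹ A`.
The summands are independent and centred, so `E[U²] = ∑ᵢ E[(cᵢ x + dᵢ/2 (x² - 1))²]
= ∑ᵢ (cᵢ² + dᵢ²/2)` by the Gaussian moments `1, 0, 1, 0, 3`; and `∑ cᵢ² = vᵀ Σ⁻¹ v`,
`∑ dᵢ² = tr((Σ⁻¹ M)²)`.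
-/

open Real Matrix MeasureTheory

/-- The centered multivariate Gaussian density `N(0, Σ)` on `ℝⁿ`. -/
noncomputable def gaussDensity {n : ℕ} (Sig : Matrix (Fin n) (Fin n) ℝ)
    (r : Fin n → ℝ) : ℝ :=
  (2 * Real.pi) ^ (-(n : ℝ) / 2) * Sig.det ^ (-(1 : ℝ) / 2) *
    Real.exp (-(1/2 : ℝ) * ∑ i, ∑ j, r i * Sig⁻¹ i j * r j)

open ProbabilityTheory
open scoped MatrixOrder

section StandardGaussian

local notation "φ" => gaussianPDFReal 0 1

lemma gaussianPDFReal_zero_one_eq : φ = fun x => (√(2 * π))⁻¹ * rexp (-x ^ 2 / 2) := by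
  ext x
  simp [gaussianPDFReal_def]

lemma hasDerivAt_gaussianPDFReal_zero_one (x : ℝ) : HasDerivAt φ (-x * φ x) x := by
  rw [gaussianPDFReal_zero_one_eq]
  exact (((hasDerivAt_pow 2 x).neg.div_const 2).exp.const_mul _).congr_deriv
    (by simp only [Pi.neg_apply]; ring)

lemma integrable_pow_mul_gaussianPDFReal (k : ℕ) : Integrable fun x => x ^ k * φ x := by
  have h := integrable_rpow_mul_exp_neg_mul_sq (b := 1 / 2) (by norm_num)
    (s := k) (neg_one_lt_zero.trans_le k.cast_nonneg)
  refine (h.const_mul (√(2 * π))⁻¹).congr (.of_forall fun x => ?_)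
  simp only [gaussianPDFReal_zero_one_eq, Real.rpow_natCast]
  ring_nf

lemma integral_mul_gaussianPDFReal : ∫ x, x * φ x = 0 :=
  integral_eq_zero_of_hasDerivAt_of_integrable (f := fun x => -φ x)
    (fun x => (hasDerivAt_gaussianPDFReal_zero_one x).neg.congr_deriv (by ring))
    (by simpa using integrable_pow_mul_gaussianPDFReal 1) (integrable_gaussianPDFReal 0 1).neg

lemma integral_pow_add_two_mul_gaussianPDFReal (k : ℕ) :
    ∫ x, x ^ (k + 2) * φ x = (k + 1) * ∫ x, x ^ k * φ x := by
  have hderiv (x : ℝ) : HasDerivAt (fun x => x ^ (k + 1) * φ x)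
      ((k + 1) * (x ^ k * φ x) - x ^ (k + 2) * φ x) x :=
    ((hasDerivAt_pow (k + 1) x).mul (hasDerivAt_gaussianPDFReal_zero_one x)).congr_deriv
      (by push_cast; ring)
  have h := integral_eq_zero_of_hasDerivAt_of_integrable hderiv
    (((integrable_pow_mul_gaussianPDFReal k).const_mul _).sub
      (integrable_pow_mul_gaussianPDFReal (k + 2)))
    (integrable_pow_mul_gaussianPDFReal (k + 1))
  rw [integral_sub ((integrable_pow_mul_gaussianPDFReal k).const_mul _)
    (integrable_pow_mul_gaussianPDFReal (k + 2)), integral_const_mul] at h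
  linarith

lemma integrable_quartic_mul_gaussianPDFReal (a₀ a₁ a₂ a₃ a₄ : ℝ) :
    Integrable fun x => (a₀ + a₁ * x + a₂ * x ^ 2 + a₃ * x ^ 3 + a₄ * x ^ 4) * φ x := by
  have h := integrable_finsetSum Finset.univ fun (k : Fin 5) _ =>
    (integrable_pow_mul_gaussianPDFReal k).const_mul (![a₀, a₁, a₂, a₃, a₄] k)
  refine h.congr (.of_forall fun x => ?_)
  simp only [Fin.sum_univ_five, Fin.isValue, cons_val, Fin.coe_ofNat_eq_mod, Nat.reduceMod]
  ring

lemma integral_quartic_mul_gaussianPDFReal (a₀ a₁ a₂ a₃ a₄ : ℝ) :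
    ∫ x, (a₀ + a₁ * x + a₂ * x ^ 2 + a₃ * x ^ 3 + a₄ * x ^ 4) * φ x = a₀ + a₂ + 3 * a₄ := by
  have m0 : ∫ x, φ x = 1 := integral_gaussianPDFReal_eq_one 0 one_ne_zero
  have m2 : ∫ x, x ^ 2 * φ x = 1 := by simpa [m0] using integral_pow_add_two_mul_gaussianPDFReal 0
  have m3 : ∫ x, x ^ 3 * φ x = 0 := by
    simpa [integral_mul_gaussianPDFReal] using integral_pow_add_two_mul_gaussianPDFReal 1
  have m4 : ∫ x, x ^ 4 * φ x = 3 := by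
    rw [integral_pow_add_two_mul_gaussianPDFReal 2, m2]; norm_num
  calc ∫ x, (a₀ + a₁ * x + a₂ * x ^ 2 + a₃ * x ^ 3 + a₄ * x ^ 4) * φ x
      = ∫ x, ∑ k : Fin 5, ![a₀, a₁, a₂, a₃, a₄] k * (x ^ (k : ℕ) * φ x) := by
        congr 1; ext x
        simp only [Fin.sum_univ_five, Fin.isValue, cons_val, Fin.coe_ofNat_eq_mod, Nat.reduceMod]
        ring
    _ = a₀ + a₂ + 3 * a₄ := by
        rw [integral_finsetSum Finset.univ fun (k : Fin 5) _ =>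
          (integrable_pow_mul_gaussianPDFReal k).const_mul (![a₀, a₁, a₂, a₃, a₄] k)]
        simp only [integral_const_mul, Fin.sum_univ_five, Fin.isValue, cons_val,
          Fin.coe_ofNat_eq_mod, Nat.reduceMod, pow_zero, pow_one, one_mul, m0,
          integral_mul_gaussianPDFReal, m2, m3, m4]
        ring

/-- The score at `θ = 0` of the family `N(c θ, 1 + d θ)`. -/
noncomputable def stdGaussianScore (c d x : ℝ) : ℝ := c * x + d / 2 * (x ^ 2 - 1)

lemma integrable_stdGaussianScore_mul (c d : ℝ) :
    Integrable fun x => stdGaussianScore c d x * φ x :=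
  (integrable_quartic_mul_gaussianPDFReal (-(d / 2)) c (d / 2) 0 0).congr
    (.of_forall fun x => by simp only [stdGaussianScore]; ring)

lemma integrable_stdGaussianScore_sq_mul (c d : ℝ) :
    Integrable fun x => stdGaussianScore c d x ^ 2 * φ x :=
  (integrable_quartic_mul_gaussianPDFReal (d ^ 2 / 4) (-(c * d)) (c ^ 2 - d ^ 2 / 2) (c * d)
    (d ^ 2 / 4)).congr (.of_forall fun x => by simp only [stdGaussianScore]; ring)

lemma integral_stdGaussianScore_mul (c d : ℝ) : ∫ x, stdGaussianScore c d x * φ x = 0 := by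
  calc ∫ x, stdGaussianScore c d x * φ x
      = ∫ x, (-(d / 2) + c * x + d / 2 * x ^ 2 + 0 * x ^ 3 + 0 * x ^ 4) * φ x := by
        congr 1; ext x; simp only [stdGaussianScore]; ring
    _ = 0 := by rw [integral_quartic_mul_gaussianPDFReal]; ring

lemma integral_stdGaussianScore_sq_mul (c d : ℝ) :
    ∫ x, stdGaussianScore c d x ^ 2 * φ x = c ^ 2 + d ^ 2 / 2 := by
  calc ∫ x, stdGaussianScore c d x ^ 2 * φ x
      = ∫ x, (d ^ 2 / 4 + -(c * d) * x + (c ^ 2 - d ^ 2 / 2) * x ^ 2 + c * d * x ^ 3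
          + d ^ 2 / 4 * x ^ 4) * φ x := by
        congr 1; ext x; simp only [stdGaussianScore]; ring
    _ = c ^ 2 + d ^ 2 / 2 := by rw [integral_quartic_mul_gaussianPDFReal]; ring

end StandardGaussian

section Independent

variable {ι E : Type*} [Fintype ι] [MeasurableSpace E] {μ : Measure E} [SigmaFinite μ]
  {g : E → ℝ} {f : ι → E → ℝ}

theorem integral_sq_sum_mul_prod_eq_sum (hg : Integrable g μ) (hg₁ : ∫ t, g t ∂μ = 1)
    (hfg : ∀ i, Integrable (fun t => f i t * g t) μ)
    (hf₂g : ∀ i, Integrable (fun t => f i t ^ 2 * g t) μ)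
    (hf₀ : ∀ i, ∫ t, f i t * g t ∂μ = 0) :
    ∫ x, (∑ i, f i (x i)) ^ 2 * ∏ m, g (x m) ∂Measure.pi (fun _ => μ)
      = ∑ i, ∫ t, f i t ^ 2 * g t ∂μ := by
  classical
  -- the `(i, j)` term of the expanded square, as a product over the coordinates `m`
  let F (i j m : ι) (t : E) : ℝ :=
    (if m = i then f i t else 1) * (if m = j then f j t else 1) * g t
  have hexpand (x : ι → E) :
      (∑ i, f i (x i)) ^ 2 * ∏ m, g (x m) = ∑ i, ∑ j, ∏ m, F i j m (x m) := by
    rw [sq, Finset.sum_mul_sum]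
    simp only [F, Finset.sum_mul, Finset.prod_mul_distrib, Finset.prod_ite_eq', Finset.mem_univ,
      if_true]
  have hF_int (i j m : ι) : Integrable (F i j m) μ := by
    by_cases hi : m = i <;> by_cases hj : m = j
    · subst hi hj; simpa [F, sq] using hf₂g m
    · subst hi; simpa [F, hj] using hfg m
    · subst hj; simpa [F, hi] using hfg m
    · simpa [F, hi, hj] using hg
  have hF (i j : ι) :
      ∫ x, ∏ m, F i j m (x m) ∂Measure.pi (fun _ => μ)
        = if i = j then ∫ t, f i t ^ 2 * g t ∂μ else 0 := by
    rw [integral_fintype_prod_eq_prod]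
    split_ifs with hij
    · subst hij
      rw [← Finset.prod_erase_mul _ _ (Finset.mem_univ i), Finset.prod_eq_one fun m hm => ?_]
      · simp [F, sq]
      · simpa [F, Finset.ne_of_mem_erase hm] using hg₁
    · exact Finset.prod_eq_zero (Finset.mem_univ i) (by simpa [F, hij] using hf₀ i)
  have hprod_int (i j : ι) : Integrable (fun x => ∏ m, F i j m (x m)) (Measure.pi fun _ => μ) :=
    Integrable.fintype_prod (hF_int i j)
  simp_rw [hexpand]
  rw [integral_finsetSum _ fun i _ => integrable_finsetSum _ fun j _ => hprod_int i j]
  simp_rw [integral_finsetSum _ fun j _ => hprod_int _ j, hF, Finset.sum_ite_eq, Finset.mem_univ,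
    if_true]

end Independent

lemma integral_sq_sum_stdGaussianScore_mul_prod {ι : Type*} [Fintype ι] (c d : ι → ℝ) :
    ∫ x : ι → ℝ, (∑ i, stdGaussianScore (c i) (d i) (x i)) ^ 2 * ∏ m, gaussianPDFReal 0 1 (x m)
      = ∑ i, (c i ^ 2 + d i ^ 2 / 2) := by
  rw [volume_pi, integral_sq_sum_mul_prod_eq_sum (integrable_gaussianPDFReal 0 1)
    (integral_gaussianPDFReal_eq_one 0 one_ne_zero)
    (fun i => integrable_stdGaussianScore_mul _ _) (fun i => integrable_stdGaussianScore_sq_mul _ _)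
    (fun i => integral_stdGaussianScore_mul _ _)]
  simp only [integral_stdGaussianScore_sq_mul]

namespace Matrix

variable {ι : Type*} [Fintype ι]

lemma mulVec_dotProduct_mulVec_mulVec (A B : Matrix ι ι ℝ) (x : ι → ℝ) :
    (A *ᵥ x) ⬝ᵥ (B *ᵥ (A *ᵥ x)) = x ⬝ᵥ ((Aᵀ * B * A) *ᵥ x) := by
  rw [← mulVec_mulVec, ← mulVec_mulVec, dotProduct_mulVec x Aᵀ, vecMul_transpose]

variable [DecidableEq ι]

lemma sum_sum_mul_mul_eq_dotProduct_mulVec (B : Matrix ι ι ℝ) (x y : ι → ℝ) :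
    ∑ i, ∑ j, x i * B i j * y j = x ⬝ᵥ (B *ᵥ y) :=
  (toBilin'_apply B x y).symm.trans (toBilin'_apply' B x y)

lemma IsSymm.exists_transpose_mul_mul_eq_diagonal {K : Matrix ι ι ℝ} (hK : K.IsSymm) :
    ∃ (Q : Matrix ι ι ℝ) (d : ι → ℝ), Q * Qᵀ = 1 ∧ Qᵀ * K * Q = diagonal d := by
  have hH : K.IsHermitian := isHermitian_iff_isSymm.mpr hK
  refine ⟨hH.eigenvectorUnitary, hH.eigenvalues, ?_, ?_⟩
  · simpa [star_eq_conjTranspose] using Unitary.mul_star_self_of_mem hH.eigenvectorUnitary.2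
  · simpa [Unitary.conjStarAlgAut_apply, star_eq_conjTranspose] using
      hH.conjStarAlgAut_star_eigenvectorUnitary

lemma PosSemidef.exists_mul_transpose_eq_and_diagonal {S K : Matrix ι ι ℝ} (hS : S.PosSemidef)
    (hK : K.IsSymm) : ∃ (A : Matrix ι ι ℝ) (d : ι → ℝ), A * Aᵀ = S ∧ Aᵀ * K * A = diagonal d := by
  obtain ⟨B, rfl⟩ := CStarAlgebra.nonneg_iff_eq_star_mul_self.mp hS.nonneg
  have hBK : (B * K * Bᵀ).IsSymm := by
    simp [IsSymm, transpose_mul, hK.eq, Matrix.mul_assoc]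
  obtain ⟨Q, d, hQ, hd⟩ := hBK.exists_transpose_mul_mul_eq_diagonal
  refine ⟨Bᵀ * Q, d, ?_, ?_⟩
  · rw [transpose_mul, transpose_transpose, Matrix.mul_assoc, ← Matrix.mul_assoc Q, hQ,
      Matrix.one_mul, star_eq_conjTranspose, conjTranspose_eq_transpose_of_trivial]
  · simpa [transpose_mul, Matrix.mul_assoc] using hd

lemma PosDef.exists_whitening {S M : Matrix ι ι ℝ} (hS : S.PosDef) (hM : M.IsSymm) :
    ∃ (A : Matrix ι ι ℝ) (d : ι → ℝ), A * Aᵀ = S ∧ Aᵀ * (S⁻¹ * M * S⁻¹) * A = diagonal d := by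
  have hSinv : S⁻¹ᵀ = S⁻¹ := by
    rw [transpose_nonsing_inv, (isHermitian_iff_isSymm.mp hS.isHermitian).eq]
  refine hS.posSemidef.exists_mul_transpose_eq_and_diagonal ?_
  simp only [IsSymm, transpose_mul, hSinv, hM.eq, Matrix.mul_assoc]

lemma isUnit_det_of_mul_transpose_eq {A S : Matrix ι ι ℝ} (hA : A * Aᵀ = S)
    (hS : IsUnit S.det) : IsUnit A.det := by
  rw [← hA, det_mul] at hS
  exact isUnit_of_mul_isUnit_left hS

lemma det_rpow_neg_half_eq {A S : Matrix ι ι ℝ} (hA : A * Aᵀ = S) :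
    S.det ^ (-(1 : ℝ) / 2) = |A.det|⁻¹ := by
  rw [← hA, det_mul, det_transpose, ← abs_mul_abs_self, ← sq, ← Real.rpow_natCast,
    ← Real.rpow_mul (abs_nonneg _)]
  norm_num [Real.rpow_neg_one]

lemma transpose_mul_inv_mul_eq_one {A S : Matrix ι ι ℝ} (hA : A * Aᵀ = S) (hS : IsUnit S.det) :
    Aᵀ * S⁻¹ * A = 1 := by
  have hAdet := isUnit_det_of_mul_transpose_eq hA hS
  rw [← hA, mul_inv_rev, ← Matrix.mul_assoc, Matrix.mul_nonsing_inv _ (by rwa [det_transpose]),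
    Matrix.one_mul, Matrix.nonsing_inv_mul _ hAdet]

lemma vecMul_inv_mul_dotProduct_self {A S : Matrix ι ι ℝ} (hA : A * Aᵀ = S) (hS : IsUnit S.det)
    (v : ι → ℝ) : (v ᵥ* (S⁻¹ * A)) ⬝ᵥ (v ᵥ* (S⁻¹ * A)) = v ⬝ᵥ (S⁻¹ *ᵥ v) := by
  have hBBt : S⁻¹ * A * (S⁻¹ * A)ᵀ = S⁻¹ᵀ := by
    rw [transpose_mul, Matrix.mul_assoc, ← Matrix.mul_assoc A, hA, ← Matrix.mul_assoc,
      nonsing_inv_mul _ hS, Matrix.one_mul]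
  rw [← dotProduct_mulVec, ← mulVec_transpose, mulVec_mulVec, hBBt, mulVec_transpose,
    dotProduct_comm, ← dotProduct_mulVec]

lemma trace_pow_transpose_mul_mul {A S : Matrix ι ι ℝ} (hA : A * Aᵀ = S) (K : Matrix ι ι ℝ)
    (k : ℕ) : ((Aᵀ * K * A) ^ k).trace = ((K * S) ^ k).trace := by
  cases k with
  | zero => simp
  | succ k =>
    have hpow : (Aᵀ * K * A) ^ (k + 1) = Aᵀ * ((K * S) ^ k * K) * A := by
      induction k with
      | zero => simp
      | succ k ih =>
        rw [pow_succ, ih, pow_succ, ← hA]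
        simp only [Matrix.mul_assoc]
    rw [hpow, trace_mul_cycle, ← Matrix.mul_assoc, hA, trace_mul_comm, ← Matrix.mul_assoc,
      ← pow_succ']

lemma trace_pow_inv_mul_eq_sum {A S M : Matrix ι ι ℝ} {d : ι → ℝ} (hA : A * Aᵀ = S)
    (hS : IsUnit S.det) (hd : Aᵀ * (S⁻¹ * M * S⁻¹) * A = diagonal d) (k : ℕ) :
    ((S⁻¹ * M) ^ k).trace = ∑ i, d i ^ k := by
  rw [← nonsing_inv_mul_cancel_right S (S⁻¹ * M) hS, ← trace_pow_transpose_mul_mul hA, hd,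
    diagonal_pow, trace_diagonal]
  rfl

end Matrix

theorem integral_comp_mulVec {ι E : Type*} [Fintype ι] [DecidableEq ι] [NormedAddCommGroup E]
    [NormedSpace ℝ E] {A : Matrix ι ι ℝ} (hA : A.det ≠ 0) (f : (ι → ℝ) → E) :
    ∫ x, f (A *ᵥ x) = |A.det|⁻¹ • ∫ x, f x := by
  have hemb : MeasurableEmbedding (Matrix.toLin' A) :=
    (A.toLinearEquiv' (invertibleOfIsUnitDet A (isUnit_iff_ne_zero.mpr hA))
      ).toContinuousLinearEquiv.toHomeomorph.measurableEmbedding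
  rw [← abs_inv, ← ENNReal.toReal_ofReal (abs_nonneg A.det⁻¹), ← integral_smul_measure,
    ← Real.map_matrix_volume_pi_eq_smul_volume_pi hA, hemb.integral_map]
  rfl

lemma gaussDensity_mulVec {n : ℕ} {S A : Matrix (Fin n) (Fin n) ℝ} (hA : Aᵀ * S⁻¹ * A = 1)
    (x : Fin n → ℝ) :
    gaussDensity S (A *ᵥ x) = S.det ^ (-(1 : ℝ) / 2) * ∏ m, gaussianPDFReal 0 1 (x m) := by
  have hquad : ∑ i, ∑ j, (A *ᵥ x) i * S⁻¹ i j * (A *ᵥ x) j = ∑ m, x m ^ 2 := by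
    rw [sum_sum_mul_mul_eq_dotProduct_mulVec, mulVec_dotProduct_mulVec_mulVec, hA, one_mulVec]
    simp [dotProduct, sq]
  have hconst : (2 * π) ^ (-(n : ℝ) / 2) = (√(2 * π))⁻¹ ^ n := by
    rw [sqrt_eq_rpow, ← rpow_neg (by positivity), ← rpow_natCast, ← rpow_mul (by positivity)]
    ring_nf
  simp only [gaussDensity, hquad, gaussianPDFReal_zero_one_eq, Finset.prod_mul_distrib,
    Finset.prod_const, Finset.card_univ, Fintype.card_fin, ← Real.exp_sum, hconst, Finset.mul_sum]
  ring_nf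

/-- The score `U` of the family `N(μ(t), Σ(t))` at a point with `μ' = v`, `Σ = Sig`, `Σ' = M`. -/
noncomputable def gaussianScore {n : ℕ} (Sig : Matrix (Fin n) (Fin n) ℝ) (v : Fin n → ℝ)
    (M : Matrix (Fin n) (Fin n) ℝ) (r : Fin n → ℝ) : ℝ :=
  (∑ i, ∑ j, v i * Sig⁻¹ i j * r j) + (1 / 2 : ℝ) * ∑ i, ∑ j, r i * (Sig⁻¹ * M * Sig⁻¹) i j * r j
    - (1 / 2 : ℝ) * (Sig⁻¹ * M).trace

lemma gaussianScore_mulVec {n : ℕ} {Sig M A : Matrix (Fin n) (Fin n) ℝ} {d : Fin n → ℝ}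
    (hd : Aᵀ * (Sig⁻¹ * M * Sig⁻¹) * A = diagonal d) (htr : (Sig⁻¹ * M).trace = ∑ i, d i)
    (v x : Fin n → ℝ) :
    gaussianScore Sig v M (A *ᵥ x) = ∑ i, stdGaussianScore ((v ᵥ* (Sig⁻¹ * A)) i) (d i) (x i) := by
  have hlin : ∑ i, ∑ j, v i * Sig⁻¹ i j * (A *ᵥ x) j = (v ᵥ* (Sig⁻¹ * A)) ⬝ᵥ x := by
    rw [sum_sum_mul_mul_eq_dotProduct_mulVec, mulVec_mulVec, dotProduct_mulVec]
  have hquad : ∑ i, ∑ j, (A *ᵥ x) i * (Sig⁻¹ * M * Sig⁻¹) i j * (A *ᵥ x) j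
      = ∑ i, d i * x i ^ 2 := by
    rw [sum_sum_mul_mul_eq_dotProduct_mulVec, mulVec_dotProduct_mulVec_mulVec, hd]
    simp only [dotProduct, mulVec_diagonal]
    exact Finset.sum_congr rfl fun i _ => by ring
  rw [gaussianScore, hlin, hquad, htr]
  simp only [stdGaussianScore, dotProduct, Finset.mul_sum, ← Finset.sum_add_distrib,
    ← Finset.sum_sub_distrib]
  exact Finset.sum_congr rfl fun i _ => by ring

theorem gaussian_fisher_information_general {n : ℕ}
    (Sig : Matrix (Fin n) (Fin n) ℝ) (hpd : Sig.PosDef)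
    (v : Fin n → ℝ) (M : Matrix (Fin n) (Fin n) ℝ) (hM : M.IsSymm) :
    ∫ r : Fin n → ℝ,
      ((∑ i, ∑ j, v i * Sig⁻¹ i j * r j)
        + (1/2 : ℝ) * ∑ i, ∑ j, r i * (Sig⁻¹ * M * Sig⁻¹) i j * r j
        - (1/2 : ℝ) * (Sig⁻¹ * M).trace) ^ 2 * gaussDensity Sig r
      = (∑ i, ∑ j, v i * Sig⁻¹ i j * v j)
        + (1/2 : ℝ) * ((Sig⁻¹ * M) ^ 2).trace := by
  obtain ⟨A, d, hA, hAd⟩ := hpd.exists_whitening hM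
  have hSig : IsUnit Sig.det := isUnit_iff_ne_zero.mpr hpd.det_pos.ne'
  have hAdet : A.det ≠ 0 := (isUnit_det_of_mul_transpose_eq hA hSig).ne_zero
  set c := v ᵥ* (Sig⁻¹ * A) with hc
  calc ∫ r, gaussianScore Sig v M r ^ 2 * gaussDensity Sig r
      = |A.det| * ∫ x, gaussianScore Sig v M (A *ᵥ x) ^ 2 * gaussDensity Sig (A *ᵥ x) := by
        rw [integral_comp_mulVec hAdet (fun r => gaussianScore Sig v M r ^ 2 * gaussDensity Sig r),
          smul_eq_mul, ← mul_assoc, mul_inv_cancel₀ (abs_ne_zero.mpr hAdet), one_mul]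
    _ = ∫ x : Fin n → ℝ, (∑ i, stdGaussianScore (c i) (d i) (x i)) ^ 2
          * ∏ m, gaussianPDFReal 0 1 (x m) := by
        have htr : (Sig⁻¹ * M).trace = ∑ i, d i := by
          simpa using trace_pow_inv_mul_eq_sum hA hSig hAd 1
        simp_rw [gaussianScore_mulVec hAd htr v, ← hc,
          gaussDensity_mulVec (transpose_mul_inv_mul_eq_one hA hSig), det_rpow_neg_half_eq hA,
          ← integral_const_mul]
        congr 1; ext x
        field_simp
    _ = ∑ i, (c i ^ 2 + d i ^ 2 / 2) := integral_sq_sum_stdGaussianScore_mul_prod c d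
    _ = _ := by
        rw [Finset.sum_add_distrib, trace_pow_inv_mul_eq_sum hA hSig hAd 2,
          sum_sum_mul_mul_eq_dotProduct_mulVec, ← vecMul_inv_mul_dotProduct_self hA hSig]
        simp only [dotProduct, sq, ← Finset.sum_div]
        ring

/-- Closed-form Fisher Information of the heteroscedastic Gaussian family:
for the score `U(r) = vᵀ Σ⁻¹ r + (1/2) rᵀ Σ⁻¹ M Σ⁻¹ r − (1/2) tr(Σ⁻¹ M)`,
`E[U²] = vᵀ Σ⁻¹ v + (1/2) tr((Σ⁻¹ M)²)`. -/
theorem gaussian_fisher_information {n : ℕ} (hn : 0 < n)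
    (Sig : Matrix (Fin n) (Fin n) ℝ) (hsym : Sig.IsSymm) (hpd : Sig.PosDef)
    (v : Fin n → ℝ) (M : Matrix (Fin n) (Fin n) ℝ) (hM : M.IsSymm) :
    ∫ r : Fin n → ℝ,
      ((∑ i, ∑ j, v i * Sig⁻¹ i j * r j)
        + (1/2 : ℝ) * ∑ i, ∑ j, r i * (Sig⁻¹ * M * Sig⁻¹) i j * r j
        - (1/2 : ℝ) * (Sig⁻¹ * M).trace) ^ 2 * gaussDensity Sig r
      = (∑ i, ∑ j, v i * Sig⁻¹ i j * v j)
        + (1/2 : ℝ) * ((Sig⁻¹ * M) ^ 2).trace :=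
  gaussian_fisher_information_general Sig hpd v M hM
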